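/- Let 0 ≤ v_0 ≤ v_1 with v_1 > 0, and let Q assign to each of the 6 types t of NC_01(C_5) a probability distribution Q(t) on answer profiles supported on profiles winning on t and with each player's answer marginal under Q(t) uniform on {0,1}. With the type drawn uniformly among the 6 types, following the advice is a Nash equilibrium — for every player i, no deviation rule d_i : {0,1} × {0,1} → {0,1} applied to (own type bit, own advice bit), with all other players answering their advice, gives player i a strictly larger expected payoff — if and only if 3 v_0 ≥ v_1. -/
import Mathlib


open Finset

/-- The 6 types of `NC₀₁(C₅)`: `none` is `Tₐ = 11111`; `some i` is the type `Tᵢ`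
giving type bit 1 to players `i` and `i + 2` and 0 to the others. -/
abbrev C5Type := Option (ZMod 5)

/-- Type bit of player `j` in type `t` of `NC₀₁(C₅)`. -/
def inputBit01 : C5Type → ZMod 5 → ZMod 2
  | none, _ => 1
  | some i, j => if j = i ∨ j = i + 2 then 1 else 0

/-- The involved set of type `t`: all five players for `Tₐ`;
`{i-1, i, i+1}` for `Tᵢ`. -/
def involvedSet : C5Type → Finset (ZMod 5)
  | none => Finset.univ
  | some i => {i - 1, i, i + 1}

/-- The target parity bit of type `t`: `1` for `Tₐ` and `0` for each `Tᵢ`. -/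
def targetBit : C5Type → ZMod 2
  | none => 1
  | some _ => 0

/-- Payoff of player `j` on (answer profile `s`, type `t`) in `NC₀₁(C₅)`:
`v_{s j}` if `s` wins on `t`, else `0`. -/
noncomputable def payoffOf (v0 v1 : ℝ) (j : ZMod 5) (s : ZMod 5 → ZMod 2)
    (t : C5Type) : ℝ :=
  if ∑ k ∈ involvedSet t, s k = targetBit t then (if s j = 1 then v1 else v0) else 0

/-- Expected payoff of player `i` when the type is uniform over the 6 types and
all players answer according to the advice correlation `Q`. -/
noncomputable def adviceUtil (v0 v1 : ℝ) (Q : C5Type → (ZMod 5 → ZMod 2) → ℝ)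
    (i : ZMod 5) : ℝ :=
  (∑ t : C5Type, ∑ s : ZMod 5 → ZMod 2, Q t s * payoffOf v0 v1 i s t) / 6

/-- Expected payoff of player `i` when everybody else follows the advice but
player `i` applies the deviation rule `d` to (own type bit, own advice bit). -/
noncomputable def deviationUtil (v0 v1 : ℝ) (Q : C5Type → (ZMod 5 → ZMod 2) → ℝ)
    (i : ZMod 5) (d : ZMod 2 → ZMod 2 → ZMod 2) : ℝ :=
  (∑ t : C5Type, ∑ s : ZMod 5 → ZMod 2, Q t s *
    payoffOf v0 v1 i (Function.update s i (d (inputBit01 t i) (s i))) t) / 6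

/-- Payoff value of answering `a`. -/
noncomputable def valV (v0 v1 : ℝ) (a : ZMod 2) : ℝ := if a = 1 then v1 else v0

/-- Expected payoff contribution (conditional on advice bit `a`) of player `i`
on type `t` when deviating with rule `d`. -/
noncomputable def Gval (v0 v1 : ℝ) (i : ZMod 5) (d : ZMod 2 → ZMod 2 → ZMod 2)
    (t : C5Type) (a : ZMod 2) : ℝ :=
  if d (inputBit01 t i) a = a then valV v0 v1 a
  else if i ∈ involvedSet t then 0 else valV v0 v1 (d (inputBit01 t i) a)

lemma valV_zero (v0 v1 : ℝ) : valV v0 v1 0 = v0 := by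
  rw [valV, if_neg (by decide)]

lemma valV_one (v0 v1 : ℝ) : valV v0 v1 1 = v1 := if_pos rfl

lemma sum_Q_comp (Q : C5Type → (ZMod 5 → ZMod 2) → ℝ) (t : C5Type) (i : ZMod 5)
    (hm : ∀ σ : ZMod 2,
      ∑ s ∈ Finset.univ.filter (fun s : ZMod 5 → ZMod 2 => s i = σ), Q t s = 1 / 2)
    (φ : ZMod 2 → ℝ) :
    ∑ s : ZMod 5 → ZMod 2, Q t s * φ (s i) = (φ 0 + φ 1) / 2 := by
  rw [← Finset.sum_filter_add_sum_filter_not Finset.univ (fun s => s i = 1)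
      (fun s => Q t s * φ (s i))]
  have e1 : ∑ s ∈ Finset.univ.filter (fun s : ZMod 5 → ZMod 2 => s i = 1),
      Q t s * φ (s i) = φ 1 / 2 := by
    rw [Finset.sum_congr rfl (fun s hs => by
      rw [(Finset.mem_filter.mp hs).2]), ← Finset.sum_mul, hm 1]
    ring
  have hfe : Finset.univ.filter (fun s : ZMod 5 → ZMod 2 => ¬ s i = 1)
      = Finset.univ.filter (fun s : ZMod 5 → ZMod 2 => s i = 0) := by
    apply Finset.filter_congr
    intro s _
    have h2 : ∀ a : ZMod 2, (¬ a = 1) ↔ a = 0 := by decide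
    simpa using h2 (s i)
  have e2 : ∑ s ∈ Finset.univ.filter (fun s : ZMod 5 → ZMod 2 => ¬ s i = 1),
      Q t s * φ (s i) = φ 0 / 2 := by
    rw [hfe, Finset.sum_congr rfl (fun s hs => by
      rw [(Finset.mem_filter.mp hs).2]), ← Finset.sum_mul, hm 0]
    ring
  rw [e1, e2]; ring

lemma sumZ (g : ZMod 5 → ℝ) : ∑ k : ZMod 5, g k = g 0 + g 1 + g 2 + g 3 + g 4 := by
  rw [show (Finset.univ : Finset (ZMod 5)) = {0,1,2,3,4} from by decide]
  rw [Finset.sum_insert (by decide), Finset.sum_insert (by decide),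
      Finset.sum_insert (by decide), Finset.sum_insert (by decide),
      Finset.sum_singleton]
  ring

lemma sumExp (i : ZMod 5) (f : C5Type → ℝ) :
    ∑ t : C5Type, f t = f none + f (some i) + f (some (i+1)) + f (some (i+2))
      + f (some (i+3)) + f (some (i+4)) := by
  rw [Fintype.sum_option]
  rw [← Equiv.sum_comp (Equiv.addLeft i) (fun k => f (some k))]
  have : ∑ j : ZMod 5, f (some (i + j))
      = f (some (i+0)) + f (some (i+1)) + f (some (i+2)) + f (some (i+3))
        + f (some (i+4)) := sumZ (fun j => f (some (i + j)))
  rw [show (∑ j : ZMod 5, (fun k => f (some k)) ((Equiv.addLeft i) j))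
      = ∑ j : ZMod 5, f (some (i + j)) from rfl, this, add_zero]
  ring

lemma group_bound (v0 v1 : ℝ) (hv0 : 0 ≤ v0) (hv01 : v0 ≤ v1) (h3 : v1 ≤ 3 * v0)
    (a c : ZMod 2) :
    (if c = a then valV v0 v1 a else 0) + (if c = a then valV v0 v1 a else 0)
      + (if c = a then valV v0 v1 a else valV v0 v1 c) ≤ 3 * valV v0 v1 a := by
  by_cases h : c = a
  · simp only [if_pos h]; linarith [le_refl (valV v0 v1 a)]
  · simp only [if_neg h]
    rcases (by decide : ∀ b : ZMod 2, b = 0 ∨ b = 1) a with ha | ha <;>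
      rcases (by decide : ∀ b : ZMod 2, b = 0 ∨ b = 1) c with hc | hc <;>
        subst ha <;> subst hc <;>
          simp only [valV_zero, valV_one] at h ⊢ <;> first | (exact absurd rfl h) | linarith

/-- **Quantum advice is a Nash equilibrium in `NC₀₁(C₅)` iff `3 v0 ≥ v1`.**
Let `0 ≤ v0 ≤ v1`, `v1 > 0`, and let `Q` assign to each of the 6 types of
`NC₀₁(C₅)` a probability distribution on answer profiles supported on winning
profiles and with uniform per-player answer marginals.  With the type uniform
over the 6 types, following the advice is a Nash equilibrium iff `3 v0 ≥ v1`. -/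
theorem advice_nash_NC01_iff (v0 v1 : ℝ) (hv0 : 0 ≤ v0) (hv01 : v0 ≤ v1) (hv1 : 0 < v1)
    (Q : C5Type → (ZMod 5 → ZMod 2) → ℝ)
    (hQnonneg : ∀ (t : C5Type) (s : ZMod 5 → ZMod 2), 0 ≤ Q t s)
    (hQsum : ∀ t : C5Type, ∑ s : ZMod 5 → ZMod 2, Q t s = 1)
    (hQwin : ∀ (t : C5Type) (s : ZMod 5 → ZMod 2), Q t s ≠ 0 →
      ∑ j ∈ involvedSet t, s j = targetBit t)
    (hQmarg : ∀ (t : C5Type) (j : ZMod 5) (σ : ZMod 2),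
      ∑ s ∈ Finset.univ.filter (fun s : ZMod 5 → ZMod 2 => s j = σ), Q t s = 1 / 2) :
    (∀ (i : ZMod 5) (d : ZMod 2 → ZMod 2 → ZMod 2),
        deviationUtil v0 v1 Q i d ≤ adviceUtil v0 v1 Q i)
    ↔ 3 * v0 ≥ v1 := by
  -- Step 1: the advice utility is always (v0 + v1) / 2.
  have advEq : ∀ i : ZMod 5, adviceUtil v0 v1 Q i = (v0 + v1) / 2 := by
    intro i
    unfold adviceUtil
    have ht : ∀ t : C5Type, ∑ s : ZMod 5 → ZMod 2, Q t s * payoffOf v0 v1 i s t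
        = (v0 + v1) / 2 := by
      intro t
      have hs : ∀ s : ZMod 5 → ZMod 2, Q t s * payoffOf v0 v1 i s t
          = Q t s * valV v0 v1 (s i) := by
        intro s
        by_cases h : Q t s = 0
        · rw [h]; ring
        · rw [payoffOf, if_pos (hQwin t s h), valV]
      rw [Finset.sum_congr rfl (fun s _ => hs s), sum_Q_comp Q t i (hQmarg t i),
        valV_zero, valV_one]
    rw [Finset.sum_congr rfl (fun t _ => ht t)]
    rw [Finset.sum_const, Finset.card_univ]
    simp only [Fintype.card_option, ZMod.card, nsmul_eq_mul]
    push_cast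
    ring
  -- Step 2: pointwise value of the deviated payoff on the support of Q.
  have hterm : ∀ (i : ZMod 5) (d : ZMod 2 → ZMod 2 → ZMod 2) (t : C5Type)
      (s : ZMod 5 → ZMod 2), (∑ j ∈ involvedSet t, s j = targetBit t) →
      payoffOf v0 v1 i (Function.update s i (d (inputBit01 t i) (s i))) t
        = Gval v0 v1 i d t (s i) := by
    intro i d t s hw
    by_cases hc : d (inputBit01 t i) (s i) = s i
    · rw [hc, Function.update_eq_self, Gval, if_pos (by rw [hc]), payoffOf, if_pos hw, valV]
    · by_cases hi : i ∈ involvedSet t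
      · have h2 : s i + ∑ j ∈ (involvedSet t).erase i, s j = targetBit t := by
          rw [Finset.add_sum_erase _ _ hi]; exact hw
        have key : ∀ (c a S T : ZMod 2), a + S = T → ¬ c = a → c + S = T + 1 := by decide
        have hsum : ∑ j ∈ involvedSet t, Function.update s i (d (inputBit01 t i) (s i)) j
            = targetBit t + 1 := by
          rw [Finset.sum_update_of_mem hi, Finset.sdiff_singleton_eq_erase]
          exact key _ _ _ _ h2 hc
        have hTT : ∀ T : ZMod 2, ¬ (T + 1 = T) := by decide
        have hne : ¬ (∑ j ∈ involvedSet t,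
            Function.update s i (d (inputBit01 t i) (s i)) j = targetBit t) := by
          rw [hsum]; exact hTT _
        rw [payoffOf, if_neg hne, Gval, if_neg hc, if_pos hi]
      · have hsum : ∑ j ∈ involvedSet t, Function.update s i (d (inputBit01 t i) (s i)) j
            = targetBit t := by
          rw [Finset.sum_congr rfl (fun j hj => Function.update_of_ne
            (ne_of_mem_of_not_mem hj hi) _ s)]
          exact hw
        rw [payoffOf, if_pos hsum, Gval, if_neg hc, if_neg hi, Function.update_self, valV]
  -- Step 3: closed form of the deviation utility.
  have devEq : ∀ (i : ZMod 5) (d : ZMod 2 → ZMod 2 → ZMod 2),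
      deviationUtil v0 v1 Q i d
        = (∑ t : C5Type, (Gval v0 v1 i d t 0 + Gval v0 v1 i d t 1) / 2) / 6 := by
    intro i d
    unfold deviationUtil
    congr 1
    refine Finset.sum_congr rfl (fun t _ => ?_)
    have hs : ∀ s : ZMod 5 → ZMod 2,
        Q t s * payoffOf v0 v1 i (Function.update s i (d (inputBit01 t i) (s i))) t
          = Q t s * Gval v0 v1 i d t (s i) := by
      intro s
      by_cases h : Q t s = 0
      · rw [h]; ring
      · rw [hterm i d t s (hQwin t s h)]
    rw [Finset.sum_congr rfl (fun s _ => hs s), sum_Q_comp Q t i (hQmarg t i)]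
  -- Step 4: evaluate Gval on each of the six types.
  have Gnone : ∀ (i : ZMod 5) d a, Gval v0 v1 i d none a
      = (if d 1 a = a then valV v0 v1 a else 0) := by
    intro i d a
    unfold Gval
    simp [inputBit01, involvedSet]
  have Gsi : ∀ (i : ZMod 5) d a, Gval v0 v1 i d (some i) a
      = (if d 1 a = a then valV v0 v1 a else 0) := by
    intro i d a
    unfold Gval
    rw [(by decide : ∀ i : ZMod 5, inputBit01 (some i) i = 1) i]
    simp [(by decide : ∀ i : ZMod 5, i ∈ involvedSet (some i)) i]
  have Gs1 : ∀ (i : ZMod 5) d a, Gval v0 v1 i d (some (i+1)) a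
      = (if d 0 a = a then valV v0 v1 a else 0) := by
    intro i d a
    unfold Gval
    rw [(by decide : ∀ i : ZMod 5, inputBit01 (some (i+1)) i = 0) i]
    simp [(by decide : ∀ i : ZMod 5, i ∈ involvedSet (some (i+1))) i]
  have Gs4 : ∀ (i : ZMod 5) d a, Gval v0 v1 i d (some (i+4)) a
      = (if d 0 a = a then valV v0 v1 a else 0) := by
    intro i d a
    unfold Gval
    rw [(by decide : ∀ i : ZMod 5, inputBit01 (some (i+4)) i = 0) i]
    simp [(by decide : ∀ i : ZMod 5, i ∈ involvedSet (some (i+4))) i]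
  have Gs2 : ∀ (i : ZMod 5) d a, Gval v0 v1 i d (some (i+2)) a
      = (if d 0 a = a then valV v0 v1 a else valV v0 v1 (d 0 a)) := by
    intro i d a
    unfold Gval
    rw [(by decide : ∀ i : ZMod 5, inputBit01 (some (i+2)) i = 0) i]
    simp [(by decide : ∀ i : ZMod 5, i ∉ involvedSet (some (i+2))) i]
  have Gs3 : ∀ (i : ZMod 5) d a, Gval v0 v1 i d (some (i+3)) a
      = (if d 1 a = a then valV v0 v1 a else valV v0 v1 (d 1 a)) := by
    intro i d a
    unfold Gval
    rw [(by decide : ∀ i : ZMod 5, inputBit01 (some (i+3)) i = 1) i]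
    simp [(by decide : ∀ i : ZMod 5, i ∉ involvedSet (some (i+3))) i]
  -- Step 5: fully explicit deviation utility.
  have devEq2 : ∀ (i : ZMod 5) (d : ZMod 2 → ZMod 2 → ZMod 2),
      deviationUtil v0 v1 Q i d
        = (((if d 1 0 = 0 then valV v0 v1 0 else 0)
            + (if d 1 0 = 0 then valV v0 v1 0 else 0)
            + (if d 1 0 = 0 then valV v0 v1 0 else valV v0 v1 (d 1 0)))
          + ((if d 1 1 = 1 then valV v0 v1 1 else 0)
            + (if d 1 1 = 1 then valV v0 v1 1 else 0)
            + (if d 1 1 = 1 then valV v0 v1 1 else valV v0 v1 (d 1 1)))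
          + ((if d 0 0 = 0 then valV v0 v1 0 else 0)
            + (if d 0 0 = 0 then valV v0 v1 0 else 0)
            + (if d 0 0 = 0 then valV v0 v1 0 else valV v0 v1 (d 0 0)))
          + ((if d 0 1 = 1 then valV v0 v1 1 else 0)
            + (if d 0 1 = 1 then valV v0 v1 1 else 0)
            + (if d 0 1 = 1 then valV v0 v1 1 else valV v0 v1 (d 0 1)))) / 12 := by
    intro i d
    rw [devEq i d,
      sumExp i (fun t => (Gval v0 v1 i d t 0 + Gval v0 v1 i d t 1) / 2),
      Gnone i d 0, Gnone i d 1, Gsi i d 0, Gsi i d 1, Gs1 i d 0, Gs1 i d 1,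
      Gs2 i d 0, Gs2 i d 1, Gs3 i d 0, Gs3 i d 1, Gs4 i d 0, Gs4 i d 1]
    ring
  constructor
  · -- Nash ⇒ 3 v0 ≥ v1 : consider the deviation "always answer 1" for player 0.
    intro hNE
    have h := hNE 0 (fun _ _ => 1)
    rw [devEq2 0 (fun _ _ => 1), advEq 0] at h
    simp only [if_neg (by decide : ¬ (1 : ZMod 2) = 0), if_pos rfl, if_true,
      valV_zero, valV_one] at h
    linarith
  · -- 3 v0 ≥ v1 ⇒ Nash.
    intro h3 i d
    rw [devEq2 i d, advEq i]
    have b1 := group_bound v0 v1 hv0 hv01 (by linarith) 0 (d 1 0)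
    have b2 := group_bound v0 v1 hv0 hv01 (by linarith) 1 (d 1 1)
    have b3 := group_bound v0 v1 hv0 hv01 (by linarith) 0 (d 0 0)
    have b4 := group_bound v0 v1 hv0 hv01 (by linarith) 1 (d 0 1)
    linarith [valV_zero v0 v1, valV_one v0 v1]
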